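/- arXiv:1312.6411 — 4 statements merged into one kernel-verified Lean document; each statement's English description precedes it below -/
import Mathlib

section
/- Let A be a nonpositive DG ring and P a DG A-module. Then P is pseudo-finite semi-free if and only if there exist an integer i₁ and natural numbers rᵢ for i ≤ i₁ such that the underlying graded A-module of P is isomorphic to the direct sum over i ≤ i₁ of rᵢ copies of A shifted by i. Moreover, P is finite semi-free if and only if additionally there is an integer i₀ with rᵢ = 0 for all i < i₀. -/
/-!
Common framework: nonpositive differential graded rings (DG rings), DG modules,
the category of DG modules, quasi-isomorphisms and derived categories
(presented as localizations at quasi-isomorphisms), semi-free DG modules, etc.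
-/

open CategoryTheory CategoryTheory.Limits MonoidalCategory

section DGPrelude

variable {R : Type} [Ring R] {𝒜 : ℤ → AddSubgroup R} [GradedRing 𝒜]
variable {S : Type} [Ring S] {𝓑 : ℤ → AddSubgroup S} [GradedRing 𝓑]

/-- A (nonpositive) DG ring structure on a `ℤ`-graded ring `(R, 𝒜)`:
a degree `1` differential satisfying `d ∘ d = 0` and the graded Leibniz rule,
with `𝒜 i = 0` for `i > 0`. -/
structure DGRing (R : Type) [Ring R] (𝒜 : ℤ → AddSubgroup R) [GradedRing 𝒜] : Type where
  d : R →+ R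
  d_mem : ∀ {i : ℤ} {a : R}, a ∈ 𝒜 i → d a ∈ 𝒜 (i + 1)
  d_sq : ∀ a : R, d (d a) = 0
  leibniz : ∀ {i : ℤ} (a b : R), a ∈ 𝒜 i →
      d (a * b) = d a * b + (Int.negOnePow i : ℤ) • (a * d b)
  nonpos : ∀ i : ℤ, 0 < i → 𝒜 i = ⊥

/-- A DG ring is (strongly) commutative if `b * a = (-1) ^ (i * j) * (a * b)` for homogeneous
elements of degrees `i, j`, and odd-degree elements square to zero. -/
structure IsCommDGRing (A : DGRing R 𝒜) : Prop where
  comm : ∀ {i j : ℤ} {a b : R}, a ∈ 𝒜 i → b ∈ 𝒜 j →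
      b * a = (Int.negOnePow (i * j) : ℤ) • (a * b)
  odd_sq : ∀ {i : ℤ} {a : R}, a ∈ 𝒜 i → Odd i → a * a = 0

/-- A (left) DG module over a DG ring. -/
structure DGMod (A : DGRing R 𝒜) : Type 1 where
  M : Type
  [addCommGroup : AddCommGroup M]
  [module : Module R M]
  grading : ℤ → AddSubgroup M
  [decomp : DirectSum.Decomposition grading]
  smul_mem : ∀ {i j : ℤ} {a : R} {m : M}, a ∈ 𝒜 i → m ∈ grading j → a • m ∈ grading (i + j)
  d : M →+ M
  d_mem : ∀ {i : ℤ} {m : M}, m ∈ grading i → d m ∈ grading (i + 1)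
  d_sq : ∀ m : M, d (d m) = 0
  leibniz : ∀ {i : ℤ} (a : R) (m : M), a ∈ 𝒜 i →
      d (a • m) = A.d a • m + (Int.negOnePow i : ℤ) • (a • d m)

attribute [instance] DGMod.addCommGroup DGMod.module DGMod.decomp

/-- The DG ring `A` viewed as a DG module over itself. -/
noncomputable def DGRing.self (A : DGRing R 𝒜) : DGMod A where
  M := R
  grading := 𝒜
  smul_mem ha hm := by simpa [smul_eq_mul] using SetLike.mul_mem_graded ha hm
  d := A.d
  d_mem := A.d_mem
  d_sq := A.d_sq
  leibniz a m ha := by simpa [smul_eq_mul] using A.leibniz a m ha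

variable {A : DGRing R 𝒜} {B : DGRing S 𝓑}

/-- Morphisms of DG modules: `R`-linear, degree `0`, commuting with differentials. -/
@[ext]
structure DGHom (M N : DGMod A) : Type where
  toFun : M.M →ₗ[R] N.M
  deg_mem : ∀ {i : ℤ} {m : M.M}, m ∈ M.grading i → toFun m ∈ N.grading i
  comm_d : ∀ m : M.M, toFun (M.d m) = N.d (toFun m)

/-- The category `M(A)` of DG `A`-modules. -/
instance : Category (DGMod A) where
  Hom M N := DGHom M N
  id M := ⟨LinearMap.id, fun h => h, fun _ => rfl⟩
  comp f g := ⟨g.toFun.comp f.toFun, fun h => g.deg_mem (f.deg_mem h), fun m => by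
    simp only [LinearMap.comp_apply, f.comm_d, g.comm_d]⟩
  id_comp f := DGHom.ext (LinearMap.comp_id _)
  comp_id f := DGHom.ext (LinearMap.id_comp _)
  assoc f g h := DGHom.ext rfl

/-- The underlying linear map of a morphism of DG modules. -/
def dgfn {M N : DGMod A} (f : M ⟶ N) : M.M →ₗ[R] N.M := DGHom.toFun f

namespace DGMod

/-- The cohomology `H^i(M)` is nonzero: there is a degree-`i` cocycle which is not
a boundary. -/
def HNonzeroAt (M : DGMod A) (i : ℤ) : Prop :=
  ∃ m ∈ M.grading i, M.d m = 0 ∧ ¬ ∃ p, M.d p = m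

/-- `M` is acyclic, i.e. `H(M) = 0`. -/
def HZero (M : DGMod A) : Prop := ∀ i, ¬ M.HNonzeroAt i

/-- `M ∈ D⁻(A)`: the cohomology of `M` is bounded above. -/
def CohBoundedAbove (M : DGMod A) : Prop := ∃ n : ℤ, ∀ i, M.HNonzeroAt i → i ≤ n

/-- `M ∈ D⁺(A)`: the cohomology of `M` is bounded below. -/
def CohBoundedBelow (M : DGMod A) : Prop := ∃ n : ℤ, ∀ i, M.HNonzeroAt i → n ≤ i

/-- `M ∈ Dᵇ(A)`. -/
def CohBounded (M : DGMod A) : Prop := M.CohBoundedAbove ∧ M.CohBoundedBelow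

/-- `H^i(M)` is a finite (finitely generated) module over `Ā = H⁰(A)`: there are finitely
many degree-`i` cocycles generating all degree-`i` cocycles modulo boundaries. -/
def HFiniteAt (M : DGMod A) (i : ℤ) : Prop :=
  ∃ s : Finset M.M, (∀ x ∈ s, x ∈ M.grading i ∧ M.d x = 0) ∧
    ∀ m ∈ M.grading i, M.d m = 0 →
      ∃ v ∈ Submodule.span R (s : Set M.M), ∃ p, m = v + M.d p

/-- `M ∈ D_f(A)`. -/
def CohFinite (M : DGMod A) : Prop := ∀ i, M.HFiniteAt i

/-- `M` is concentrated in degree `0`; equivalently, `M` is (the image of) a module over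
`Ā = H⁰(A)`, restricted along the canonical homomorphism `A → Ā`. -/
def Deg0Module (M : DGMod A) : Prop := ∀ i, i ≠ 0 → M.grading i = ⊥

end DGMod

/-- Quasi-isomorphisms of DG modules: the induced map on cohomology is bijective
in each degree. -/
def qiso {M N : DGMod A} (f : M ⟶ N) : Prop :=
  (∀ i : ℤ, ∀ n ∈ N.grading i, N.d n = 0 →
      ∃ m ∈ M.grading i, M.d m = 0 ∧ ∃ p, n - dgfn f m = N.d p) ∧
  (∀ i : ℤ, ∀ m ∈ M.grading i, M.d m = 0 → (∃ p, dgfn f m = N.d p) → ∃ q, M.d q = m)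

/-- The class of quasi-isomorphisms in `M(A)`; the derived category `D(A)` is the
localization of `M(A)` at this class. -/
def qis (A : DGRing R 𝒜) : MorphismProperty (DGMod A) := fun _ _ f => qiso f

/-- Homomorphisms of DG rings. -/
structure DGRingHom (A : DGRing R 𝒜) (B : DGRing S 𝓑) : Type where
  toRingHom : R →+* S
  deg_mem : ∀ {i : ℤ} {a : R}, a ∈ 𝒜 i → toRingHom a ∈ 𝓑 i
  comm_d : ∀ a : R, toRingHom (A.d a) = B.d (toRingHom a)

/-- A DG ring homomorphism is a quasi-isomorphism. -/
def DGRingHom.qiso (f : DGRingHom A B) : Prop :=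
  (∀ i : ℤ, ∀ b ∈ 𝓑 i, B.d b = 0 →
      ∃ a ∈ 𝒜 i, A.d a = 0 ∧ ∃ p, b - f.toRingHom a = B.d p) ∧
  (∀ i : ℤ, ∀ a ∈ 𝒜 i, A.d a = 0 → (∃ p, f.toRingHom a = B.d p) → ∃ q, A.d q = a)

/-- Restriction of a DG `B`-module along a DG ring homomorphism `A → B`. -/
def DGRingHom.rest (f : DGRingHom A B) (N : DGMod B) : DGMod A where
  M := N.M
  module := Module.compHom N.M f.toRingHom
  grading := N.grading
  smul_mem ha hm := N.smul_mem (f.deg_mem ha) hm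
  d := N.d
  d_mem := N.d_mem
  d_sq := N.d_sq
  leibniz a m ha := by
    have h := N.leibniz (f.toRingHom a) m (f.deg_mem ha)
    rw [← f.comm_d] at h
    exact h

/-- The restriction functor `rest_f : M(B) → M(A)`. -/
def DGRingHom.restFunctor (f : DGRingHom A B) : DGMod B ⥤ DGMod A where
  obj := f.rest
  map {N N'} g :=
    { toFun :=
      { toFun := (dgfn g : N.M →ₗ[S] N'.M)
        map_add' := fun x y => map_add _ x y
        map_smul' := fun a m => (dgfn g).map_smul (f.toRingHom a) m }
      deg_mem := fun h => g.deg_mem h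
      comm_d := fun m => g.comm_d m }
  map_id N := DGHom.ext (by ext m; rfl)
  map_comp g h := DGHom.ext (by ext m; rfl)

/-- The underlying function of a morphism into a restricted DG module. -/
def restFn {P : DGMod A} {N : DGMod B} (f : DGRingHom A B) (φ : P ⟶ f.rest N) :
    P.M → N.M := fun p => dgfn φ p

/-- `π : A → Ā` exhibits the DG ring `Ā` (concentrated in degree `0`) as the reduction
`Ā = H⁰(A)` of `A`. -/
structure IsReduction (π : DGRingHom A B) : Prop where
  conc : ∀ i : ℤ, i ≠ 0 → 𝓑 i = ⊥
  surj : ∀ b : S, ∃ a ∈ 𝒜 0, π.toRingHom a = b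
  inj : ∀ a ∈ 𝒜 0, π.toRingHom a = 0 → ∃ p, A.d p = a

/-- The set of homogeneous elements of negative degree, together with boundaries of
elements of degree `-1`; these generate `ker(A → Ā)`. -/
def augSet (A : DGRing R 𝒜) : Set R :=
  {a | (∃ i, i < 0 ∧ a ∈ 𝒜 i) ∨ ∃ b ∈ 𝒜 (-1), A.d b = a}

/-- `φ : P → N` exhibits `N` (a DG module over the reduction `Ā`) as the reduction
`Ā ⊗_A P` of the DG `A`-module `P`. -/
def IsReductionMod (π : DGRingHom A B) (P : DGMod A) (N : DGMod B) (φ : P ⟶ π.rest N) :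
    Prop :=
  (∀ i : ℤ, ∀ x ∈ N.grading i, ∃ p ∈ P.grading i, dgfn φ p = x) ∧
  (∀ p : P.M, dgfn φ p = 0 ↔
      p ∈ Submodule.span R {y | ∃ a ∈ augSet A, ∃ m : P.M, y = a • m})

/-- A semi-basis of a DG module: a homogeneous basis `b` of the underlying graded module,
filtered (by `filt`) so that the differential of a basis element lies in the span of
strictly lower filtration levels.  A DG module is semi-free iff it admits a semi-basis. -/
structure SemiBasis (P : DGMod A) : Type 1 where
  ι : Type
  b : Module.Basis ι R P.M
  ndeg : ι → ℤ
  homog : ∀ k, b k ∈ P.grading (ndeg k)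
  filt : ι → ℕ
  d_mem : ∀ k, P.d (b k) ∈
    Submodule.span R (Set.range fun l : {l : ι // filt l < filt k} => b l.1)

/-- Semi-free DG modules. -/
def IsSemiFree (P : DGMod A) : Prop := Nonempty (SemiBasis P)

/-- A semi-basis is pseudo-finite if each filtration level is finite, and the degrees of the
basis elements tend to `-∞` along the filtration. -/
def SemiBasis.PseudoFinite {P : DGMod A} (sb : SemiBasis P) : Prop :=
  (∀ j : ℕ, {k | sb.filt k = j}.Finite) ∧
  ∀ c : ℤ, ∃ j₀ : ℕ, ∀ k, j₀ ≤ sb.filt k → sb.ndeg k ≤ c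

/-- Pseudo-finite semi-free DG modules. -/
def IsPseudoFiniteSemiFree (P : DGMod A) : Prop := ∃ sb : SemiBasis P, sb.PseudoFinite

/-- Finite semi-free DG modules: a pseudo-finite semi-basis of finite filtration length,
equivalently a finite semi-basis. -/
def IsFiniteSemiFree (P : DGMod A) : Prop := ∃ sb : SemiBasis P, Finite sb.ι

/-- `P` is semi-free of semi-free length at most `l`. -/
def SemiFreeLengthLE (P : DGMod A) (l : ℕ) : Prop := ∃ sb : SemiBasis P, ∀ k, sb.filt k < l

/-- `P` is a free DG module on a basis concentrated in degree `0` indexed by `κ`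
(a direct sum of copies of `A`, `P ≅ A^{⊕κ}`). -/
def IsFreeDeg0On (P : DGMod A) (κ : Type) : Prop :=
  ∃ sb : SemiBasis P, Nonempty (sb.ι ≃ κ) ∧ (∀ k, sb.ndeg k = 0) ∧ (∀ k, sb.filt k = 0)

/-- `M` is generated (as a graded module) in degrees lying in the set `I`:
it is generated over `R` by homogeneous elements with degrees in `I`. -/
def GeneratedIn (M : DGMod A) (I : Set ℤ) : Prop :=
  ∃ G : Set M.M, (∀ x ∈ G, ∃ i ∈ I, x ∈ M.grading i) ∧ Submodule.span R G = ⊤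

/-- The multiplicative set `S̃ = π⁻¹({sⁿ}) ∩ A⁰ ⊆ A⁰` of elements of degree `0` mapping in
`Ā = H⁰(A)` to a power of (the class of) `s`. -/
def locSet (A : DGRing R 𝒜) (s : R) : Set R :=
  {a | a ∈ 𝒜 0 ∧ ∃ n : ℕ, ∃ p, a - s ^ n = A.d p}

/-- `f : A → B` exhibits `B` as the localization of the DG ring `A` at the multiplicative
set `T ⊆ A⁰`. -/
def IsDGLocalization (f : DGRingHom A B) (T : Set R) : Prop :=
  (∀ t ∈ T, IsUnit (f.toRingHom t)) ∧
  (∀ i : ℤ, ∀ b ∈ 𝓑 i, ∃ a ∈ 𝒜 i, ∃ t ∈ T, f.toRingHom t * b = f.toRingHom a) ∧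
  (∀ a : R, f.toRingHom a = 0 → ∃ t ∈ T, t * a = 0)

/-- `φ : P → P'` exhibits the DG `B`-module `P'` as the localization `B ⊗_A P` of `P`
at `T` (where `f : A → B` is the corresponding localization of DG rings). -/
def IsLocalizedDGMod (f : DGRingHom A B) (T : Set R) {P : DGMod A} {P' : DGMod B}
    (φ : P ⟶ f.rest P') : Prop :=
  (∀ i : ℤ, ∀ x ∈ P'.grading i, ∃ p ∈ P.grading i, ∃ t ∈ T, f.toRingHom t • x = dgfn φ p) ∧
  (∀ p : P.M, dgfn φ p = 0 → ∃ t ∈ T, t • p = 0)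

/-- A covering sequence of `Ā = H⁰(A)`: degree-`0` elements whose classes generate the
unit ideal of `Ā`. -/
def IsCoveringSeq (A : DGRing R 𝒜) {n : ℕ} (s : Fin n → R) : Prop :=
  (∀ k, s k ∈ 𝒜 0) ∧
  ∃ c : Fin n → R, (∀ k, c k ∈ 𝒜 0) ∧ ∃ p, (∑ k, c k * s k) - 1 = A.d p

/-- An idempotent covering sequence of `Ā = H⁰(A)`: pairwise orthogonal idempotents of
`Ā` summing to `1` (all conditions on classes modulo boundaries). -/
def IsIdempotentCoveringSeq (A : DGRing R 𝒜) {n : ℕ} (e : Fin n → R) : Prop :=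
  (∀ k, e k ∈ 𝒜 0) ∧ (∀ k, ∃ p, e k * e k - e k = A.d p) ∧
  (∀ k l, k ≠ l → ∃ p, e k * e l = A.d p) ∧ ∃ p, (∑ k, e k) - 1 = A.d p

end DGPrelude

/-- A bundled DG ring. -/
structure DGRingPack : Type 1 where
  S : Type
  [ringS : Ring S]
  𝓑 : ℤ → AddSubgroup S
  [gradedS : GradedRing 𝓑]
  B : DGRing S 𝓑

attribute [instance] DGRingPack.ringS DGRingPack.gradedS

section DGPrelude2

variable {R : Type} [Ring R] {𝒜 : ℤ → AddSubgroup R} [GradedRing 𝒜] {A : DGRing R 𝒜}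

/-- `P` is a geometrically perfect DG module: locally on `Spec Ā`, for a covering sequence
`s` of `Ā`, the localized DG module `A_{sₖ} ⊗_A P` is isomorphic in the derived category to
a finite semi-free DG module. -/
def IsGeomPerfect (A : DGRing R 𝒜) (P : DGMod A) : Prop :=
  ∃ (n : ℕ) (s : Fin n → R), IsCoveringSeq A s ∧
    ∀ k : Fin n, ∃ (W : DGRingPack) (f : DGRingHom A W.B),
      IsDGLocalization f (locSet A (s k)) ∧
      ∃ (P' : DGMod W.B) (φ : P ⟶ f.rest P'), IsLocalizedDGMod f (locSet A (s k)) φ ∧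
        ∃ (F : DGMod W.B) (g : F ⟶ P'), IsFiniteSemiFree F ∧ qiso g

/-- Bilinear, balanced, graded, differential-compatible pairings `M × N → T`
of DG `A`-modules. -/
structure BilinData (M N T : DGMod A) : Type where
  τ : M.M → N.M → T.M
  add_left : ∀ m m' n, τ (m + m') n = τ m n + τ m' n
  add_right : ∀ m n n', τ m (n + n') = τ m n + τ m n'
  smul_left : ∀ (a : R) (m : M.M) (n : N.M), τ (a • m) n = a • τ m n
  bal : ∀ {i j : ℤ} {a : R} {m : M.M}, a ∈ 𝒜 i → m ∈ M.grading j → ∀ n,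
      τ (a • m) n = (Int.negOnePow (i * j) : ℤ) • τ m (a • n)
  deg : ∀ {i j : ℤ} {m : M.M} {n : N.M}, m ∈ M.grading i → n ∈ N.grading j →
      τ m n ∈ T.grading (i + j)
  d_comp : ∀ {i : ℤ} {m : M.M}, m ∈ M.grading i → ∀ n,
      T.d (τ m n) = τ (M.d m) n + (Int.negOnePow i : ℤ) • τ m (N.d n)

/-- `T` together with a universal pairing `τ` is the tensor product `M ⊗_A N`. -/
structure TensorData (M N : DGMod A) : Type 1 where
  T : DGMod A
  bil : BilinData M N T
  gen : Submodule.span R {x | ∃ m n, x = bil.τ m n} = ⊤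
  universal : ∀ (C : DGMod A) (γ : BilinData M N C),
      ∃ ψ : T ⟶ C, ∀ m n, dgfn ψ (bil.τ m n) = γ.τ m n

/-- `P` is K-flat: its tensor product with any acyclic DG module is acyclic. -/
def KFlat (P : DGMod A) : Prop :=
  ∀ (N : DGMod A) (td : TensorData P N), N.HZero → td.T.HZero

/-- The monoidal structure on the localized category `D` is compatible with the derived
tensor product: for `M` K-flat, `Q(M) ⊗ Q(N) ≅ Q(M ⊗_A N)`. -/
def TensorCompatible {D : Type 1} [Category.{0} D] [MonoidalCategory D]
    (Q : DGMod A ⥤ D) : Prop :=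
  ∀ (M N : DGMod A) (td : TensorData M N), KFlat M →
    Nonempty ((Q.obj M ⊗ Q.obj N) ≅ Q.obj td.T)

/-- The shift functors of `D` are compatible with cohomology. -/
def ShiftCompatible {D : Type 1} [Category.{0} D] [HasShift D ℤ]
    (Q : DGMod A ⥤ D) : Prop :=
  ∀ (M N : DGMod A) (k : ℤ), Nonempty (Q.obj N ≅ (Q.obj M)⟦k⟧) →
    ∀ i : ℤ, N.HNonzeroAt i ↔ M.HNonzeroAt (i + k)

end DGPrelude2

section CatPrelude

variable {D : Type 1} [Category.{0} D]

/-- The comparison map `⊕ᵢ Hom(L, Xᵢ) → Hom(L, ∐ X)`. -/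
noncomputable def coprodCompare [Preadditive D] (L : D) {ι : Type} [DecidableEq ι] (X : ι → D)
    [Limits.HasCoproduct X] : (Π₀ i, (L ⟶ X i)) →+ (L ⟶ ∐ X) :=
  DFinsupp.sumAddHom fun i =>
    AddMonoidHom.mk' (fun g => g ≫ Limits.Sigma.ι X i) fun _ _ =>
      Preadditive.add_comp _ _ _ _ _ _

/-- `L` is a compact object: `Hom(L, -)` commutes with arbitrary direct sums. -/
def IsCompactObj [Preadditive D] (L : D) : Prop :=
  ∀ (ι : Type) (inst : DecidableEq ι) (X : ι → D) (h : Limits.HasCoproduct X),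
    Function.Bijective (@coprodCompare D _ _ L ι inst X h)

/-- A tilting object of a monoidal category: it has a quasi-inverse w.r.t. `⊗`. -/
def IsTilting [MonoidalCategory D] (X : D) : Prop :=
  ∃ Y : D, Nonempty ((X ⊗ Y) ≅ 𝟙_ D)

/-- The canonical "adjunction" morphism `𝟙 ⟶ RHom(X, X)` in a closed monoidal category. -/
noncomputable def adjUnit [MonoidalCategory D] [MonoidalClosed D] (X : D) :
    𝟙_ D ⟶ (ihom X).obj X :=
  MonoidalClosed.curry (ρ_ X).hom

/-- The canonical morphism `RHom(L, M) ⊗ N ⟶ RHom(L, M ⊗ N)`. -/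
noncomputable def rhomTensorCompare [MonoidalCategory D] [MonoidalClosed D] (L M N : D) :
    ((ihom L).obj M ⊗ N) ⟶ (ihom L).obj (M ⊗ N) :=
  MonoidalClosed.curry ((α_ L ((ihom L).obj M) N).inv ≫ ((ihom.ev L).app M ▷ N))

/-- The biduality morphism `X ⟶ RHom(RHom(X, E), E)`. -/
noncomputable def bidualityMap [MonoidalCategory D] [MonoidalClosed D]
    [BraidedCategory D] (E X : D) :
    X ⟶ (ihom ((ihom X).obj E)).obj E :=
  MonoidalClosed.curry ((β_ ((ihom X).obj E) X).hom ≫ (ihom.ev X).app E)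

/-- The setoid of isomorphism on a class of objects of a category. -/
def isoSetoid (P : D → Prop) : Setoid {X : D // P X} :=
  ⟨fun X Y => Nonempty (X.1 ≅ Y.1),
    ⟨fun _ => ⟨Iso.refl _⟩, fun ⟨e⟩ => ⟨e.symm⟩, fun ⟨e⟩ ⟨f⟩ => ⟨e.trans f⟩⟩⟩

/-- Isomorphism classes of objects satisfying `P`. -/
def IsoClasses (P : D → Prop) : Type 1 := Quotient (isoSetoid P)

end CatPrelude

/-- An invertible module over a commutative ring. -/
def IsInvertibleModule {B : Type} [CommRing B] (M : ModuleCat B) : Prop :=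
  ∃ N : ModuleCat B, Nonempty ((M ⊗ N) ≅ ModuleCat.of B B)

/-- The Picard "set" of a commutative ring: isomorphism classes of invertible modules. -/
def PicCls (B : Type) [CommRing B] : Type 1 :=
  IsoClasses (D := ModuleCat B) IsInvertibleModule

/-- The derived Picard "set" of a monoidal category: isomorphism classes of tilting
objects. -/
def DPicCls (D : Type 1) [Category.{0} D] [MonoidalCategory D] : Type 1 :=
  IsoClasses (D := D) IsTilting
section Statement0

variable {R : Type} [Ring R] {𝒜 : ℤ → AddSubgroup R} [GradedRing 𝒜] {A : DGRing R 𝒜}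

/-- The underlying graded `A^♮`-module of `P` is isomorphic to
`⊕_{i} A^♮[-i]^{⊕ r i}`: there is a homogeneous basis with exactly `r i` elements
in each degree `i`. -/
def GradedFreeOn (P : DGMod A) (r : ℤ → ℕ) : Prop :=
  ∃ (ι : Type) (b : Module.Basis ι R P.M) (ndeg : ι → ℤ),
    (∀ k, b k ∈ P.grading (ndeg k)) ∧
    ∀ i : ℤ, Nonempty ({k : ι // ndeg k = i} ≃ Fin (r i))

/-!
Over a nonpositive DG ring the coefficients of a homogeneous element in a homogeneous basis
only involve basis elements of degree at least its own. So the differential of a basis element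
of degree `n` is a combination of basis elements of degree `> n`, and any homogeneous basis
with degrees bounded above by `i₁` is a semi-basis for the codegree filtration `i₁ - deg`;
this filtration is pseudo-finite exactly when each degree carries finitely many basis elements.
Conversely, in a pseudo-finite semi-basis the elements of degree `≥ i` lie in finitely many
filtration levels, so each degree is finite and the degrees are bounded above.
-/

namespace DGMod

theorem decompose_smul_of_mem (P : DGMod A) (c : R) {j : ℤ} {m : P.M}
    (hm : m ∈ P.grading j) (t : ℤ) :
    (DirectSum.decompose P.grading (c • m) t : P.M) =
      (DirectSum.decompose 𝒜 c (t - j) : R) • m := by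
  classical
  have hterm : ∀ i, (DirectSum.decompose P.grading
      ((DirectSum.decompose 𝒜 c i : R) • m) t : P.M) =
        if i = t - j then (DirectSum.decompose 𝒜 c i : R) • m else 0 := by
    intro i
    have hmem := P.smul_mem (SetLike.coe_mem (DirectSum.decompose 𝒜 c i)) hm
    split_ifs with h
    · subst h
      exact DirectSum.decompose_of_mem_same _ (by rwa [sub_add_cancel] at hmem)
    · exact DirectSum.decompose_of_mem_ne _ hmem (by omega)
  conv_lhs => rw [← DirectSum.sum_support_decompose 𝒜 c, Finset.sum_smul,
    DirectSum.decompose_sum, DFinsupp.finsetSum_apply, AddSubgroup.val_finsetSum]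
  simp only [hterm, Finset.sum_ite_eq']
  split_ifs with h
  · rfl
  · rw [DFinsupp.notMem_support_iff.mp h, ZeroMemClass.coe_zero, zero_smul]

variable {P : DGMod A} {ι : Type} (b : Module.Basis ι R P.M) {deg : ι → ℤ}

theorem decompose_mem_span_basis_deg_ge (hb : ∀ k, b k ∈ P.grading (deg k))
    (x : P.M) (n : ℤ) :
    (DirectSum.decompose P.grading x n : P.M) ∈ Submodule.span R (b '' {l | n ≤ deg l}) := by
  classical
  rw [← b.linearCombination_repr x, Finsupp.linearCombination_apply, Finsupp.sum,
    DirectSum.decompose_sum, DFinsupp.finsetSum_apply, AddSubgroup.val_finsetSum]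
  refine Submodule.sum_mem _ fun l _ => ?_
  rw [P.decompose_smul_of_mem _ (hb l)]
  by_cases hl : n ≤ deg l
  · exact Submodule.smul_mem _ _ (Submodule.subset_span ⟨l, hl, rfl⟩)
  · have hzero : ∀ y ∈ 𝒜 (n - deg l), y = 0 := fun y hy => by
      rwa [A.nonpos _ (by omega), AddSubgroup.mem_bot] at hy
    rw [hzero _ (SetLike.coe_mem _), zero_smul]
    exact Submodule.zero_mem _

theorem d_basis_mem_span_deg_gt (hb : ∀ k, b k ∈ P.grading (deg k)) (k : ι) :
    P.d (b k) ∈ Submodule.span R (b '' {l | deg k < deg l}) := by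
  have h := decompose_mem_span_basis_deg_ge b hb (P.d (b k)) (deg k + 1)
  rw [DirectSum.decompose_of_mem_same _ (P.d_mem (hb k))] at h
  simpa only [Order.add_one_le_iff] using h

end DGMod

namespace SemiBasis

variable {P : DGMod A} {ι : Type} (b : Module.Basis ι R P.M) (deg : ι → ℤ)
  (hb : ∀ k, b k ∈ P.grading (deg k)) {i₁ : ℤ} (hdeg : ∀ k, deg k ≤ i₁)

def ofDegLE : SemiBasis P where
  ι := ι
  b := b
  ndeg := deg
  homog := hb
  filt k := (i₁ - deg k).toNat
  d_mem k := by
    refine Submodule.span_mono ?_ (DGMod.d_basis_mem_span_deg_gt b hb k)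
    rintro _ ⟨l, hl, rfl⟩
    have := hdeg k
    have := hdeg l
    exact ⟨⟨l, by simp only [Set.mem_ofPred_eq] at hl; omega⟩, rfl⟩

theorem ofDegLE_pseudoFinite (hfin : ∀ i, (deg ⁻¹' {i}).Finite) :
    (ofDegLE b deg hb hdeg).PseudoFinite := by
  refine ⟨fun j => (hfin (i₁ - j)).subset fun k hk => ?_,
    fun c => ⟨(i₁ - c).toNat, fun k hk => ?_⟩⟩
  all_goals
    have := hdeg k
    simp only [ofDegLE, Set.mem_ofPred_eq, Set.mem_preimage, Set.mem_singleton_iff] at hk ⊢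
    omega

variable {sb : SemiBasis P}

theorem PseudoFinite.finite_filt_lt (h : sb.PseudoFinite) (j : ℕ) :
    (sb.filt ⁻¹' Set.Iio j).Finite :=
  (Set.finite_Iio j).preimage' fun j _ => h.1 j

theorem PseudoFinite.finite_ndeg_fiber (h : sb.PseudoFinite) (i : ℤ) :
    (sb.ndeg ⁻¹' {i}).Finite := by
  obtain ⟨j₀, hj₀⟩ := h.2 (i - 1)
  refine (h.finite_filt_lt j₀).subset fun k hk => ?_
  by_contra hlt
  have := hj₀ k (not_lt.1 hlt)
  simp only [Set.mem_preimage, Set.mem_singleton_iff] at hk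
  omega

theorem PseudoFinite.bddAbove_range_ndeg (h : sb.PseudoFinite) :
    BddAbove (Set.range sb.ndeg) := by
  obtain ⟨j₀, hj₀⟩ := h.2 0
  obtain ⟨M, hM⟩ := ((h.finite_filt_lt j₀).image sb.ndeg).bddAbove
  refine ⟨max M 0, ?_⟩
  rintro _ ⟨k, rfl⟩
  by_cases hk : sb.filt k < j₀
  · exact (hM ⟨k, hk, rfl⟩).trans (le_max_left _ _)
  · exact (hj₀ k (not_lt.1 hk)).trans (le_max_right _ _)

end SemiBasis

def HasDegreewiseFiniteBasisIn (P : DGMod A) (I : Set ℤ) : Prop :=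
  ∃ (ι : Type) (b : Module.Basis ι R P.M) (deg : ι → ℤ), (∀ k, b k ∈ P.grading (deg k)) ∧
    (∀ i, (deg ⁻¹' {i}).Finite) ∧ ∀ k, deg k ∈ I

theorem exists_gradedFreeOn_iff (P : DGMod A) (I : Set ℤ) :
    (∃ r : ℤ → ℕ, (∀ i ∉ I, r i = 0) ∧ GradedFreeOn P r) ↔ HasDegreewiseFiniteBasisIn P I := by
  constructor
  · rintro ⟨r, hr, ι, b, deg, hb, hcard⟩
    refine ⟨ι, b, deg, hb, fun i => ?_, fun k => ?_⟩
    · exact Set.finite_coe_iff.mp (Finite.of_equiv _ (hcard i).some.symm)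
    · by_contra hk
      obtain ⟨e⟩ := hcard (deg k)
      rw [hr _ hk] at e
      exact (e ⟨k, rfl⟩).elim0
  · rintro ⟨ι, b, deg, hb, hfin, hI⟩
    refine ⟨fun i => Nat.card (deg ⁻¹' {i}), fun i hi => ?_, ι, b, deg, hb, fun i => ?_⟩
    · have : IsEmpty (deg ⁻¹' {i}) := ⟨fun ⟨k, hk⟩ => hi (hk ▸ hI k)⟩
      exact Nat.card_of_isEmpty
    · have : Finite {k // deg k = i} := (hfin i).to_subtype
      exact ⟨Finite.equivFin _⟩

theorem isPseudoFiniteSemiFree_iff (P : DGMod A) :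
    IsPseudoFiniteSemiFree P ↔ ∃ i₁, HasDegreewiseFiniteBasisIn P (Set.Iic i₁) := by
  constructor
  · rintro ⟨sb, h⟩
    obtain ⟨i₁, hi₁⟩ := h.bddAbove_range_ndeg
    exact ⟨i₁, sb.ι, sb.b, sb.ndeg, sb.homog, h.finite_ndeg_fiber, fun k => hi₁ ⟨k, rfl⟩⟩
  · rintro ⟨i₁, ι, b, deg, hb, hfin, hdeg⟩
    exact ⟨_, SemiBasis.ofDegLE_pseudoFinite b deg hb hdeg hfin⟩

theorem isFiniteSemiFree_iff (P : DGMod A) :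
    IsFiniteSemiFree P ↔ ∃ i₀ i₁, HasDegreewiseFiniteBasisIn P (Set.Icc i₀ i₁) := by
  constructor
  · rintro ⟨sb, hfin⟩
    obtain ⟨i₀, h₀⟩ := (Set.finite_range sb.ndeg).bddBelow
    obtain ⟨i₁, h₁⟩ := (Set.finite_range sb.ndeg).bddAbove
    exact ⟨i₀, i₁, sb.ι, sb.b, sb.ndeg, sb.homog, fun i => Set.toFinite _,
      fun k => ⟨h₀ ⟨k, rfl⟩, h₁ ⟨k, rfl⟩⟩⟩
  · rintro ⟨i₀, i₁, ι, b, deg, hb, hfin, hdeg⟩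
    refine ⟨SemiBasis.ofDegLE b deg hb fun k => (hdeg k).2, ?_⟩
    show Finite ι
    exact Set.finite_univ_iff.mp
      (((Set.finite_Icc i₀ i₁).preimage' fun i _ => hfin i).subset fun k _ => hdeg k)

/-- Proposition 5.7 of the paper.  Let `A` be a nonpositive DG ring and
`P` a DG `A`-module.  Then `P` is pseudo-finite semi-free iff there are `i₁ : ℤ` and
ranks `r i ∈ ℕ` (vanishing for `i > i₁`) such that `P^♮ ≅ ⊕_{i ≤ i₁} A^♮[-i]^{⊕ rᵢ}`
as graded `A^♮`-modules; and `P` is finite semi-free iff moreover there is `i₀` with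
`r i = 0` for all `i < i₀`. -/
theorem statement0 (A : DGRing R 𝒜) (P : DGMod A) :
    (IsPseudoFiniteSemiFree P ↔
      ∃ (i₁ : ℤ) (r : ℤ → ℕ), (∀ i : ℤ, i₁ < i → r i = 0) ∧ GradedFreeOn P r) ∧
    (IsFiniteSemiFree P ↔
      ∃ (i₁ : ℤ) (r : ℤ → ℕ), (∀ i : ℤ, i₁ < i → r i = 0) ∧ GradedFreeOn P r ∧
        ∃ i₀ : ℤ, ∀ i : ℤ, i < i₀ → r i = 0) := by
  refine ⟨?_, ?_⟩
  · simp only [isPseudoFiniteSemiFree_iff, ← exists_gradedFreeOn_iff, Set.mem_Iic, not_le]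
  · rw [isFiniteSemiFree_iff]
    simp only [← exists_gradedFreeOn_iff, Set.mem_Icc, not_and_or, not_le]
    constructor
    · rintro ⟨i₀, i₁, r, hr, hfree⟩
      exact ⟨i₁, r, fun i hi => hr i (Or.inr hi), hfree, i₀, fun i hi => hr i (Or.inl hi)⟩
    · rintro ⟨i₁, r, hr₁, hfree, i₀, hr₀⟩
      exact ⟨i₀, i₁, r, fun i hi => hi.elim (hr₀ i) (hr₁ i), hfree⟩

end Statement0
end

section
/- Let A be a nonpositive DG ring. Then the derived reduction functor M ↦ Ā ⊗^L_A M from D⁻(A) to D⁻(Ā) is conservative: if Ā ⊗^L_A M ≅ 0 then M ≅ 0. -/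
/-!
Common framework: nonpositive differential graded rings (DG rings), DG modules,
the category of DG modules, quasi-isomorphisms and derived categories
(presented as localizations at quasi-isomorphisms), semi-free DG modules, etc.
-/

open CategoryTheory CategoryTheory.Limits MonoidalCategory

/-!
Let `P → M` be a semi-free resolution, `i₀` the top degree in which `H(P) ≠ 0`, and `m` a
degree-`i₀` cocycle. If `Ā ⊗_A P` is acyclic, `m` is, modulo boundaries, in the kernel `I · P`
of the reduction. Since `A` is nonpositive and `I` is generated by `A^{<0}` and `d(A^{-1})`, the
degree-`i₀` part of `I · P` lies, modulo boundaries, in the span of the basis vectors of degree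
`> i₀`. As `H^{>i₀}(P) = 0`, the inclusion of that span into `P` is null-homotopic (the homotopy
is built by recursion along the semi-free filtration), so `m` is a boundary.
-/

namespace DGMod

variable {R : Type} [Ring R] {𝒜 : ℤ → AddSubgroup R} [GradedRing 𝒜] {A : DGRing R 𝒜}
variable (P : DGMod A)

noncomputable def proj (j : ℤ) : P.M →+ P.M :=
  (P.grading j).subtype.comp
    ((DFinsupp.evalAddMonoidHom j).comp (DirectSum.decomposeAddEquiv P.grading).toAddMonoidHom)

noncomputable def sign : P.M →+ P.M :=
  (DirectSum.toAddMonoid fun j => (j.negOnePow : ℤ) • (P.grading j).subtype).comp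
    (DirectSum.decomposeAddEquiv P.grading).toAddMonoidHom

variable {P}

lemma proj_mem (j : ℤ) (x : P.M) : P.proj j x ∈ P.grading j := SetLike.coe_mem _

lemma proj_of_mem {j : ℤ} {x : P.M} (hx : x ∈ P.grading j) : P.proj j x = x :=
  DirectSum.decompose_of_mem_same _ hx

lemma proj_of_mem_of_ne {i j : ℤ} {x : P.M} (hx : x ∈ P.grading i) (hij : i ≠ j) :
    P.proj j x = 0 :=
  DirectSum.decompose_of_mem_ne _ hx hij

lemma proj_d (j : ℤ) (x : P.M) : P.proj (j + 1) (P.d x) = P.d (P.proj j x) := by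
  induction x using DirectSum.Decomposition.inductionOn P.grading with
  | zero => simp only [map_zero]
  | @homogeneous i x =>
    obtain rfl | hij := eq_or_ne i j
    · rw [proj_of_mem x.2, proj_of_mem (P.d_mem x.2)]
    · rw [proj_of_mem_of_ne x.2 hij, proj_of_mem_of_ne (P.d_mem x.2) (by omega), map_zero]
  | add x y hx hy => simp only [map_add, hx, hy]

lemma proj_smul {i : ℤ} {c : R} (hc : c ∈ 𝒜 i) (j : ℤ) (x : P.M) :
    P.proj j (c • x) = c • P.proj (j - i) x := by
  induction x using DirectSum.Decomposition.inductionOn P.grading with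
  | zero => simp only [smul_zero, map_zero]
  | @homogeneous k x =>
    obtain rfl | hkj := eq_or_ne k (j - i)
    · rw [proj_of_mem x.2, proj_of_mem (by simpa using P.smul_mem hc x.2)]
    · rw [proj_of_mem_of_ne x.2 hkj, proj_of_mem_of_ne (P.smul_mem hc x.2) (by omega),
        smul_zero]
  | add x y hx hy => simp only [smul_add, map_add, hx, hy]

lemma sign_of_mem {j : ℤ} {x : P.M} (hx : x ∈ P.grading j) :
    P.sign x = (j.negOnePow : ℤ) • x := by
  simp [sign, DirectSum.decompose_of_mem P.grading hx]

lemma sign_mem {j : ℤ} {x : P.M} (hx : x ∈ P.grading j) : P.sign x ∈ P.grading j := by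
  rw [sign_of_mem hx]
  exact zsmul_mem hx _

lemma sign_sign (x : P.M) : P.sign (P.sign x) = x := by
  induction x using DirectSum.Decomposition.inductionOn P.grading with
  | zero => simp only [map_zero]
  | @homogeneous j x =>
    rw [sign_of_mem x.2, sign_of_mem (zsmul_mem x.2 _), smul_smul, ← Units.val_mul,
      Int.units_mul_self, Units.val_one, one_smul]
  | add x y hx hy => simp only [map_add, hx, hy]

lemma sign_d (x : P.M) : P.sign (P.d x) = -P.d (P.sign x) := by
  induction x using DirectSum.Decomposition.inductionOn P.grading with
  | zero => simp only [map_zero, neg_zero]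
  | @homogeneous j x =>
    rw [sign_of_mem (P.d_mem x.2), sign_of_mem x.2, map_zsmul, Int.negOnePow_succ,
      Units.val_neg, neg_smul]
  | add x y hx hy => simp only [map_add, hx, hy, neg_add]

lemma sign_smul {i : ℤ} {c : R} (hc : c ∈ 𝒜 i) (x : P.M) :
    P.sign (c • x) = (i.negOnePow : ℤ) • c • P.sign x := by
  induction x using DirectSum.Decomposition.inductionOn P.grading with
  | zero => simp only [smul_zero, map_zero]
  | @homogeneous j x =>
    rw [sign_of_mem (P.smul_mem hc x.2), sign_of_mem x.2, Int.negOnePow_add, Units.val_mul,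
      mul_smul, smul_comm c]
  | add x y hx hy => simp only [smul_add, map_add, hx, hy]

lemma exists_mem_d_eq_of_not_hNonzeroAt {j : ℤ} (hj : ¬ P.HNonzeroAt j) {x : P.M}
    (hx : x ∈ P.grading j) (hdx : P.d x = 0) : ∃ y ∈ P.grading (j - 1), P.d y = x := by
  obtain ⟨p, rfl⟩ : ∃ p, P.d p = x := not_not.mp fun h => hj ⟨x, hx, hdx, h⟩
  refine ⟨P.proj (j - 1) p, proj_mem _ _, ?_⟩
  rw [← proj_d, sub_add_cancel, proj_of_mem hx]

end DGMod

namespace SemiBasis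

open DGMod

variable {R : Type} [Ring R] {𝒜 : ℤ → AddSubgroup R} [GradedRing 𝒜] {A : DGRing R 𝒜}
variable {P : DGMod A} (sb : SemiBasis P)

lemma proj_smul_basis (j : ℤ) (c : R) (k : sb.ι) :
    P.proj j (c • sb.b k) = (DirectSum.decompose 𝒜 c (j - sb.ndeg k) : R) • sb.b k := by
  induction c using DirectSum.Decomposition.inductionOn 𝒜 with
  | zero => simp only [zero_smul, map_zero, DirectSum.decompose_zero, DirectSum.zero_apply,
      ZeroMemClass.coe_zero]
  | @homogeneous i c =>
    rw [proj_smul c.2]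
    obtain h | h := eq_or_ne (sb.ndeg k) (j - i)
    · rw [← h, proj_of_mem (sb.homog k), show j - sb.ndeg k = i by omega,
        DirectSum.decompose_of_mem_same 𝒜 c.2]
    · rw [proj_of_mem_of_ne (sb.homog k) h, DirectSum.decompose_of_mem_ne 𝒜 c.2 (by omega),
        smul_zero, zero_smul]
  | add c c' hc hc' => simp only [add_smul, map_add, hc, hc', DirectSum.decompose_add,
      DirectSum.add_apply, AddMemClass.coe_add]

lemma repr_mem_of_mem {j : ℤ} {x : P.M} (hx : x ∈ P.grading j) (k : sb.ι) :
    sb.b.repr x k ∈ 𝒜 (j - sb.ndeg k) := by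
  set c := sb.b.repr x
  have hsum : ∑ l ∈ c.support, c l • sb.b l = x := by
    rw [← Finsupp.linearCombination_apply_of_mem_supported R (s := c.support) (fun _ h => h),
      sb.b.linearCombination_repr]
  have hcomp : ∑ l ∈ c.support,
      (c l - (DirectSum.decompose 𝒜 (c l) (j - sb.ndeg l) : R)) • sb.b l = 0 := by
    simp_rw [sub_smul, Finset.sum_sub_distrib, ← proj_smul_basis, ← map_sum, hsum,
      proj_of_mem hx, sub_self]
  by_cases hk : k ∈ c.support
  · rw [sub_eq_zero.mp (linearIndependent_iff'.mp sb.b.linearIndependent _ _ hcomp k hk)]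
    exact SetLike.coe_mem _
  · rw [Finsupp.notMem_support_iff.mp hk]
    exact zero_mem _

noncomputable def spanAbove (i : ℤ) : Submodule R P.M :=
  Submodule.span R (sb.b '' {k | i < sb.ndeg k})

lemma mem_spanAbove_of_mem {i j : ℤ} (hij : i < j) {x : P.M} (hx : x ∈ P.grading j) :
    x ∈ sb.spanAbove i := by
  refine sb.b.mem_span_image.mpr fun k hk => ?_
  by_contra hki
  have h := sb.repr_mem_of_mem hx k
  rw [A.nonpos _ (by simp only [Set.mem_ofPred_eq] at hki; omega), AddSubgroup.mem_bot] at h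
  exact Finsupp.mem_support_iff.mp hk h

lemma support_repr_d_basis (k : sb.ι) :
    ↑(sb.b.repr (P.d (sb.b k))).support ⊆
      {l | sb.filt l < sb.filt k ∧ sb.ndeg k < sb.ndeg l} :=
  Set.subset_inter
    ((sb.b.mem_span_image (s := {l | sb.filt l < sb.filt k})).mp
      (by rw [Set.image_eq_range]; exact sb.d_mem k))
    (sb.b.mem_span_image.mp (sb.mem_spanAbove_of_mem (lt_add_one _) (P.d_mem (sb.homog k))))

lemma constr_mem {i : ℤ} {t : sb.ι → P.M} {j : ℤ} {x : P.M} (hx : x ∈ P.grading j)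
    (ht : ∀ l ∈ (sb.b.repr x).support, t l ∈ P.grading (sb.ndeg l + i)) :
    sb.b.constr ℤ t x ∈ P.grading (j + i) := by
  rw [Module.Basis.constr_apply]
  refine AddSubgroup.sum_mem _ fun l hl => ?_
  simpa [show j - sb.ndeg l + (sb.ndeg l + i) = j + i by omega]
    using P.smul_mem (sb.repr_mem_of_mem hx l) (ht l hl)

/-- `s` is `R`-linear without Koszul sign, so `d s - s d` commutes with scalars of degree `i`
only up to `(-1)ⁱ`, exactly like `P.sign`. -/
noncomputable def commutatorD (t : sb.ι → P.M) : P.M →+ P.M :=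
  P.d.comp (sb.b.constr ℤ t).toAddMonoidHom - (sb.b.constr ℤ t).toAddMonoidHom.comp P.d

lemma commutatorD_apply (t : sb.ι → P.M) (x : P.M) :
    sb.commutatorD t x = P.d (sb.b.constr ℤ t x) - sb.b.constr ℤ t (P.d x) := rfl

lemma commutatorD_smul (t : sb.ι → P.M) {i : ℤ} {c : R} (hc : c ∈ 𝒜 i) (x : P.M) :
    sb.commutatorD t (c • x) = (i.negOnePow : ℤ) • c • sb.commutatorD t x := by
  rw [commutatorD_apply, commutatorD_apply, P.leibniz c x hc, map_add, LinearMap.map_smul,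
    map_zsmul, LinearMap.map_smul, LinearMap.map_smul, P.leibniz c _ hc, smul_sub, smul_sub]
  abel

lemma commutatorD_eq_sign_of_mem_span {t : sb.ι → P.M} {s : Set sb.ι}
    (hs : ∀ k ∈ s, sb.commutatorD t (sb.b k) = P.sign (sb.b k)) {x : P.M}
    (hx : x ∈ Submodule.span R (sb.b '' s)) : sb.commutatorD t x = P.sign x := by
  induction hx using Submodule.span_induction with
  | mem y hy =>
    obtain ⟨k, hk, rfl⟩ := hy
    exact hs k hk
  | zero => simp only [map_zero]
  | add y z _ _ hy hz => rw [map_add, map_add, hy, hz]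
  | smul c y _ hy =>
    induction c using DirectSum.Decomposition.inductionOn 𝒜 with
    | zero => simp only [zero_smul, map_zero]
    | @homogeneous i c => rw [commutatorD_smul sb t c.2, sign_smul c.2, hy]
    | add c c' hc hc' => rw [add_smul, map_add, map_add, hc, hc']

open scoped Classical in
/-- The values `s (b k)` of a map with `d s - s d = sign` on the span of the basis vectors of
degree above a bound on the cohomology, by recursion along the filtration. -/
noncomputable def contraction (k : sb.ι) : P.M :=
  if h : ∃ v ∈ P.grading (sb.ndeg k - 1), P.d v = P.sign (sb.b k) +
      sb.b.constr ℤ (fun l => if _ : sb.filt l < sb.filt k then contraction l else 0)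
        (P.d (sb.b k))
  then h.choose else 0
termination_by sb.filt k

lemma constr_truncate_contraction (k : sb.ι) :
    sb.b.constr ℤ (fun l => if _ : sb.filt l < sb.filt k then sb.contraction l else 0)
      (P.d (sb.b k)) = sb.b.constr ℤ sb.contraction (P.d (sb.b k)) := by
  simp only [Module.Basis.constr_apply]
  refine Finsupp.sum_congr fun l hl => ?_
  rw [dif_pos (sb.support_repr_d_basis k hl).1]

lemma contraction_spec {i₀ : ℤ} (hac : ∀ j, i₀ < j → ¬ P.HNonzeroAt j) (k : sb.ι)
    (hk : i₀ < sb.ndeg k) :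
    sb.contraction k ∈ P.grading (sb.ndeg k - 1) ∧
      sb.commutatorD sb.contraction (sb.b k) = P.sign (sb.b k) := by
  induction hn : sb.filt k using Nat.strong_induction_on generalizing k with
  | _ n ih =>
  have hsupp := sb.support_repr_d_basis k
  have ih' : ∀ l ∈ (sb.b.repr (P.d (sb.b k))).support,
      sb.contraction l ∈ P.grading (sb.ndeg l - 1) ∧
        sb.commutatorD sb.contraction (sb.b l) = P.sign (sb.b l) := fun l hl =>
    ih _ (hn ▸ (hsupp hl).1) l (hk.trans (hsupp hl).2) rfl
  have hr : P.sign (sb.b k) + sb.b.constr ℤ sb.contraction (P.d (sb.b k)) ∈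
      P.grading (sb.ndeg k) := by
    refine add_mem (sign_mem (sb.homog k)) ?_
    simpa using sb.constr_mem (i := -1) (P.d_mem (sb.homog k))
      fun l hl => by simpa [sub_eq_add_neg] using (ih' l hl).1
  have hdr : P.d (P.sign (sb.b k) + sb.b.constr ℤ sb.contraction (P.d (sb.b k))) = 0 := by
    have hd : sb.commutatorD sb.contraction (P.d (sb.b k)) = P.sign (P.d (sb.b k)) :=
      sb.commutatorD_eq_sign_of_mem_span (fun l hl => (ih' l hl).2)
        (sb.b.mem_span_image.mpr subset_rfl)
    rw [commutatorD_apply, P.d_sq, map_zero, sub_zero, sign_d] at hd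
    rw [map_add, hd, add_neg_cancel]
  have hex := exists_mem_d_eq_of_not_hNonzeroAt (hac _ hk) hr hdr
  rw [← sb.constr_truncate_contraction] at hex
  obtain ⟨hmem, hd⟩ : sb.contraction k ∈ P.grading (sb.ndeg k - 1) ∧
      P.d (sb.contraction k) =
        P.sign (sb.b k) + sb.b.constr ℤ sb.contraction (P.d (sb.b k)) := by
    rw [contraction, dif_pos hex, ← sb.constr_truncate_contraction]
    exact hex.choose_spec
  exact ⟨hmem, by rw [commutatorD_apply, Module.Basis.constr_basis, hd, add_sub_cancel_right]⟩

lemma exists_d_eq_of_mem_spanAbove {i₀ : ℤ} (hac : ∀ j, i₀ < j → ¬ P.HNonzeroAt j)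
    {w : P.M} (hw : w ∈ sb.spanAbove i₀) (hdw : P.d w = 0) : ∃ v, P.d v = w := by
  have h :=
    sb.commutatorD_eq_sign_of_mem_span (fun k hk => (sb.contraction_spec hac k hk).2) hw
  rw [commutatorD_apply, hdw, map_zero, sub_zero] at h
  refine ⟨-P.sign (sb.b.constr ℤ sb.contraction w), ?_⟩
  rw [map_neg, ← sign_d, h, sign_sign]

end SemiBasis

section Reduction

open DGMod

variable {R : Type} [Ring R] {𝒜 : ℤ → AddSubgroup R} [GradedRing 𝒜] {A : DGRing R 𝒜}

lemma mul_mem_augSet {i : ℤ} {c a : R} (hc : c ∈ 𝒜 i) (ha : a ∈ augSet A) :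
    c * a ∈ augSet A := by
  obtain hi | hi := lt_or_ge 0 i
  · rw [A.nonpos i hi, AddSubgroup.mem_bot] at hc
    rw [hc, zero_mul]
    exact Or.inl ⟨-1, by norm_num, zero_mem _⟩
  rcases ha with ⟨j, hj, ha⟩ | ⟨b, hb, rfl⟩
  · exact Or.inl ⟨i + j, by omega, SetLike.mul_mem_graded hc ha⟩
  obtain hi | rfl := hi.lt_or_eq
  · exact Or.inl ⟨i, hi, by simpa using SetLike.mul_mem_graded hc (A.d_mem hb)⟩
  · have hdc : A.d c ∈ 𝒜 1 := by simpa using A.d_mem hc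
    rw [A.nonpos 1 one_pos, AddSubgroup.mem_bot] at hdc
    refine Or.inr ⟨c * b, by simpa using SetLike.mul_mem_graded hc hb, ?_⟩
    rw [A.leibniz c b hc, hdc, zero_mul, zero_add, Int.negOnePow_zero, Units.val_one, one_smul]

/-- The kernel `I · P` of the reduction `P → Ā ⊗_A P`, where `I = ker (A → Ā)`. -/
def augSpan (A : DGRing R 𝒜) (P : DGMod A) : Submodule R P.M :=
  Submodule.span R {y | ∃ a ∈ augSet A, ∃ m : P.M, y = a • m}

variable {P : DGMod A}

lemma mem_closure_of_mem_augSpan {x : P.M} (hx : x ∈ augSpan A P) :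
    x ∈ AddSubgroup.closure {y | ∃ a ∈ augSet A, ∃ m : P.M, y = a • m} := by
  induction hx using Submodule.span_induction with
  | mem y hy => exact AddSubgroup.subset_closure hy
  | zero => exact zero_mem _
  | add y z _ _ hy hz => exact add_mem hy hz
  | smul c y hyK hy =>
    clear hyK
    induction c using DirectSum.Decomposition.inductionOn 𝒜 with
    | zero => rw [zero_smul]; exact zero_mem _
    | @homogeneous i c =>
      induction hy using AddSubgroup.closure_induction with
      | mem z hz =>
        obtain ⟨a, ha, m, rfl⟩ := hz
        exact AddSubgroup.subset_closure
          ⟨c * a, mul_mem_augSet c.2 ha, m, (mul_smul _ _ _).symm⟩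
      | zero => rw [smul_zero]; exact zero_mem _
      | add z z' _ _ hz hz' => rw [smul_add]; exact add_mem hz hz'
      | neg z _ hz => rw [smul_neg]; exact neg_mem hz
    | add c c' hc hc' => rw [add_smul]; exact add_mem hc hc'

lemma SemiBasis.proj_mem_of_mem_augSpan (sb : SemiBasis P) (i₀ : ℤ) {x : P.M}
    (hx : x ∈ augSpan A P) :
    P.proj i₀ x ∈ (sb.spanAbove i₀).toAddSubgroup ⊔ P.d.range := by
  have hx' := mem_closure_of_mem_augSpan hx
  clear hx
  induction hx' using AddSubgroup.closure_induction with
  | mem y hy =>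
    obtain ⟨a, ⟨j, hj, ha⟩ | ⟨b, hb, rfl⟩, m, rfl⟩ := hy
    · rw [proj_smul ha]
      exact AddSubgroup.mem_sup_left <| Submodule.smul_mem _ _ <|
        sb.mem_spanAbove_of_mem (by omega) (proj_mem _ _)
    · set v := P.proj i₀ m
      have hdb : A.d b ∈ 𝒜 0 := by simpa using A.d_mem hb
      rw [proj_smul hdb, sub_zero]
      have hv : A.d b • v = b • P.d v + P.d (b • v) := by
        rw [P.leibniz b v hb]
        simp [Int.negOnePow_neg]
      rw [hv]
      exact add_mem (AddSubgroup.mem_sup_left <| Submodule.smul_mem _ _ <|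
          sb.mem_spanAbove_of_mem (lt_add_one i₀) (P.d_mem (proj_mem _ _)))
        (AddSubgroup.mem_sup_right ⟨_, rfl⟩)
  | zero => rw [map_zero]; exact zero_mem _
  | add y z _ _ hy hz => rw [map_add]; exact add_mem hy hz
  | neg y _ hy => rw [map_neg]; exact neg_mem hy

end Reduction

section Conservativity

open DGMod

variable {R : Type} [Ring R] {𝒜 : ℤ → AddSubgroup R} [GradedRing 𝒜] {A : DGRing R 𝒜}
variable {S : Type} [Ring S] {𝓑 : ℤ → AddSubgroup S} [GradedRing 𝓑] {B : DGRing S 𝓑}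

lemma dgfn_d {M N : DGMod A} (f : M ⟶ N) (m : M.M) : dgfn f (M.d m) = N.d (dgfn f m) :=
  f.comm_d m

lemma DGMod.HNonzeroAt.of_qiso {P M : DGMod A} {f : P ⟶ M} (hf : qiso f) {i : ℤ}
    (h : P.HNonzeroAt i) : M.HNonzeroAt i := by
  obtain ⟨m, hm, hdm, hnb⟩ := h
  refine ⟨dgfn f m, f.deg_mem hm, by rw [← dgfn_d, hdm, map_zero], ?_⟩
  rintro ⟨p, hp⟩
  exact hnb (hf.2 i m hm hdm ⟨p, hp.symm⟩)

lemma DGMod.HZero.of_qiso {P M : DGMod A} {f : P ⟶ M} (hf : qiso f) (h : P.HZero) :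
    M.HZero := by
  rintro i ⟨n, hn, hdn, hnb⟩
  obtain ⟨m, hm, hdm, p, hp⟩ := hf.1 i n hn hdn
  obtain ⟨q, rfl⟩ : ∃ q, P.d q = m := not_not.mp fun h' => h i ⟨m, hm, hdm, h'⟩
  refine hnb ⟨p + dgfn f q, ?_⟩
  rw [map_add, ← hp, ← dgfn_d, sub_add_cancel]

lemma exists_sub_d_mem_augSpan {π : DGRingHom A B} {P : DGMod A} {N : DGMod B}
    {φ : P ⟶ π.rest N} (hred : IsReductionMod π P N φ) (hz : N.HZero) {i : ℤ} {m : P.M}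
    (hm : m ∈ P.grading i) (hdm : P.d m = 0) : ∃ p, m - P.d p ∈ augSpan A P := by
  have hφd : ∀ x, dgfn φ (P.d x) = N.d (dgfn φ x) := φ.comm_d
  have hφm : dgfn φ m ∈ N.grading i := φ.deg_mem hm
  obtain ⟨y, hy, hdy⟩ :=
    exists_mem_d_eq_of_not_hNonzeroAt (hz i) hφm (by rw [← hφd, hdm, map_zero]; rfl)
  obtain ⟨p, -, rfl⟩ := hred.1 (i - 1) y hy
  refine ⟨p, (hred.2 _).mp ?_⟩
  rw [map_sub, hφd, hdy, sub_self]

lemma SemiBasis.exists_d_eq_of_sub_d_mem_augSpan {P : DGMod A} (sb : SemiBasis P) {i₀ : ℤ}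
    (hac : ∀ j, i₀ < j → ¬ P.HNonzeroAt j) {m p : P.M} (hm : m ∈ P.grading i₀)
    (hdm : P.d m = 0) (hp : m - P.d p ∈ augSpan A P) : ∃ v, P.d v = m := by
  have hdp : P.proj i₀ (P.d p) ∈ P.d.range :=
    ⟨P.proj (i₀ - 1) p, by rw [← proj_d, sub_add_cancel]⟩
  have hmem : m ∈ (sb.spanAbove i₀).toAddSubgroup ⊔ P.d.range := by
    simpa [proj_of_mem hm] using
      add_mem (sb.proj_mem_of_mem_augSpan i₀ hp) (AddSubgroup.mem_sup_right hdp)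
  obtain ⟨w, hw, _, ⟨q, rfl⟩, rfl⟩ := AddSubgroup.mem_sup.mp hmem
  obtain ⟨v, hv⟩ := sb.exists_d_eq_of_mem_spanAbove hac hw
    (by rwa [map_add, P.d_sq, add_zero] at hdm)
  exact ⟨v + q, by rw [map_add, hv]⟩

lemma SemiBasis.hZero_of_isReductionMod {π : DGRingHom A B} {P : DGMod A} (sb : SemiBasis P)
    (hP : P.CohBoundedAbove) {N : DGMod B} {φ : P ⟶ π.rest N}
    (hred : IsReductionMod π P N φ) (hz : N.HZero) : P.HZero := by
  by_contra hnz
  obtain ⟨i, hi⟩ : ∃ i, P.HNonzeroAt i := by simpa [HZero] using hnz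
  obtain ⟨i₀, ⟨m, hm, hdm, hnb⟩, hmax⟩ := Int.exists_greatest_of_bdd hP ⟨i, hi⟩
  obtain ⟨p, hp⟩ := exists_sub_d_mem_augSpan hred hz hm hdm
  exact hnb (sb.exists_d_eq_of_sub_d_mem_augSpan
    (fun j hj h => (hmax j h).not_gt hj) hm hdm hp)

end Conservativity

section Statement3

variable {R : Type} [Ring R] {𝒜 : ℤ → AddSubgroup R} [GradedRing 𝒜]
variable {S : Type} [Ring S] {𝓑 : ℤ → AddSubgroup S} [GradedRing 𝓑]

theorem statement3_general (A : DGRing R 𝒜) (Abar : DGRing S 𝓑) (π : DGRingHom A Abar)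
    (M : DGMod A) (hM : M.CohBoundedAbove)
    (P : DGMod A) (f : P ⟶ M) (hsf : IsSemiFree P) (hq : qiso f)
    (N : DGMod Abar) (φ : P ⟶ π.rest N) (hred : IsReductionMod π P N φ)
    (hz : N.HZero) : M.HZero := by
  obtain ⟨sb⟩ := hsf
  obtain ⟨n, hn⟩ := hM
  have hP : P.CohBoundedAbove := ⟨n, fun i hi => hn i (hi.of_qiso hq)⟩
  exact (sb.hZero_of_isReductionMod hP hred hz).of_qiso hq

/-- Proposition 3.1 of the paper.  Let `A` be a nonpositive DG ring with
reduction `π : A → Ā = H⁰(A)`.  The derived reduction functor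
`M ↦ Ā ⊗^L_A M : D⁻(A) → D⁻(Ā)` is conservative: if `M` has bounded above cohomology and
`Ā ⊗^L_A M ≅ 0` (computed via a semi-free resolution `P → M` of `M`), then `M ≅ 0`
in `D(A)`, i.e. `M` is acyclic. -/
theorem statement3 (A : DGRing R 𝒜) (Abar : DGRing S 𝓑) (π : DGRingHom A Abar)
    (hπ : IsReduction π)
    (M : DGMod A) (hM : M.CohBoundedAbove)
    (P : DGMod A) (f : P ⟶ M) (hsf : IsSemiFree P) (hq : qiso f)
    (N : DGMod Abar) (φ : P ⟶ π.rest N) (hred : IsReductionMod π P N φ)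
    (hz : N.HZero) : M.HZero :=
  statement3_general A Abar π M hM P f hsf hq N φ hred hz

end Statement3
end

section
/- Let A be a commutative (strongly commutative nonpositive) DG ring and S a multiplicatively closed subset of Ā = H⁰(A). Let A_S := A⁰_S ⊗_{A⁰} A where A⁰_S is the localization of A⁰ at the preimage of S. Then there is a unique isomorphism of graded H(A)-rings H(A_S) ≅ H(A)_S := Ā_S ⊗_Ā H(A), and for any DG A-module M a unique isomorphism of graded H(A_S)-modules H(A_S ⊗_A M) ≅ H(A)_S ⊗_{H(A)} H(M) compatible with the maps from H(M). -/
/-!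
Common framework: nonpositive differential graded rings (DG rings), DG modules,
the category of DG modules, quasi-isomorphisms and derived categories
(presented as localizations at quasi-isomorphisms), semi-free DG modules, etc.
-/

open CategoryTheory CategoryTheory.Limits MonoidalCategory

/-!
Elements of `T` are degree-`0` cocycles (`A` is nonpositive), so multiplication by them commutes
with the differential. A cocycle `x` of `A_S ⊗_A M` can be written `t⁻¹ m` with `m` a cochain
of `M` whose differential dies in `A_S ⊗_A M`, hence is killed by some `t' ∈ T`; then `t' m` is
a cocycle representing `t' t x`. If a cocycle `m` becomes a boundary `d q`, write
`q = t⁻¹ c`: then `t m - d c` dies after localizing, so `t' t m = d (t' c)` for some `t' ∈ T`.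
The ring statement is the case `M = A`.
-/

section LocalizedCohomology

variable {R : Type} [Ring R] {𝒜 : ℤ → AddSubgroup R} [GradedRing 𝒜]
variable {S : Type} [Ring S] {𝓑 : ℤ → AddSubgroup S} [GradedRing 𝓑]
variable {A : DGRing R 𝒜} {B : DGRing S 𝓑}

theorem DGRing.d_eq_zero_of_mem_zero (A : DGRing R 𝒜) {a : R} (ha : a ∈ 𝒜 0) : A.d a = 0 := by
  simpa [A.nonpos 1 one_pos] using A.d_mem ha

theorem DGMod.d_smul_of_mem_zero (M : DGMod A) {a : R} (ha : a ∈ 𝒜 0) (m : M.M) :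
    M.d (a • m) = a • M.d m := by
  simp [M.leibniz a m ha, A.d_eq_zero_of_mem_zero ha]

theorem DGMod.decompose_d (M : DGMod A) (x : M.M) (i : ℤ) :
    (DirectSum.decompose M.grading (M.d x) i : M.M) =
      M.d (DirectSum.decompose M.grading x (i - 1)) := by
  induction x using DirectSum.Decomposition.inductionOn M.grading with
  | zero => simp
  | @homogeneous j m =>
    by_cases h : j + 1 = i
    · subst h
      rw [DirectSum.decompose_of_mem_same _ (M.d_mem m.2), add_sub_cancel_right,
        DirectSum.decompose_of_mem_same _ m.2]
    · rw [DirectSum.decompose_of_mem_ne _ (M.d_mem m.2) h,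
        DirectSum.decompose_of_mem_ne _ m.2 (by omega), map_zero]
  | add x y hx hy =>
    simp only [map_add, DirectSum.decompose_add, DirectSum.add_apply, AddSubgroup.coe_add, hx, hy]

theorem DGMod.exists_mem_d_eq (M : DGMod A) {i : ℤ} {x : M.M} (hx : x ∈ M.grading i)
    {p : M.M} (hp : M.d p = x) : ∃ q ∈ M.grading (i - 1), M.d q = x :=
  ⟨_, SetLike.coe_mem _, by
    rw [← M.decompose_d, hp, DirectSum.decompose_of_mem_same _ hx]⟩

variable {M : DGMod A} {M' : DGMod B} (f : DGRingHom A B) (φ : M ⟶ f.rest M')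

theorem restFn_smul (r : R) (x : M.M) : restFn f φ (r • x) = f.toRingHom r • restFn f φ x :=
  (dgfn φ).map_smul r x

theorem restFn_sub (x y : M.M) : restFn f φ (x - y) = restFn f φ x - restFn f φ y :=
  map_sub (dgfn φ) x y

theorem restFn_d (x : M.M) : restFn f φ (M.d x) = M'.d (restFn f φ x) :=
  φ.comm_d x

variable {f φ} {T : Set R}

namespace IsLocalizedDGMod

theorem exists_cocycle_map_eq_smul (hφ : IsLocalizedDGMod f T φ)
    (hT0 : ∀ t ∈ T, t ∈ 𝒜 0) (hTmul : ∀ t ∈ T, ∀ t' ∈ T, t * t' ∈ T)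
    {i : ℤ} {x : M'.M} (hx : x ∈ M'.grading i) (hdx : M'.d x = 0) :
    ∃ m ∈ M.grading i, M.d m = 0 ∧ ∃ t ∈ T, f.toRingHom t • x = restFn f φ m := by
  obtain ⟨m, hm, t, ht, htm⟩ :
      ∃ m ∈ M.grading i, ∃ t ∈ T, f.toRingHom t • x = restFn f φ m := hφ.1 i x hx
  have hdm : restFn f φ (M.d m) = 0 := by
    rw [restFn_d, ← htm, M'.d_smul_of_mem_zero (f.deg_mem (hT0 t ht)), hdx, smul_zero]
  obtain ⟨t', ht', ht'm⟩ := hφ.2 _ hdm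
  refine ⟨t' • m, zero_add i ▸ M.smul_mem (hT0 t' ht') hm, ?_, t' * t, hTmul t' ht' t ht, ?_⟩
  · rw [M.d_smul_of_mem_zero (hT0 t' ht'), ht'm]
  · rw [restFn_smul, map_mul, mul_smul, ← htm]

theorem exists_smul_eq_d (hφ : IsLocalizedDGMod f T φ)
    (hT0 : ∀ t ∈ T, t ∈ 𝒜 0) (hTmul : ∀ t ∈ T, ∀ t' ∈ T, t * t' ∈ T)
    {i : ℤ} {m : M.M} (hm : m ∈ M.grading i) {p : M'.M} (hp : restFn f φ m = M'.d p) :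
    ∃ t ∈ T, ∃ q, t • m = M.d q := by
  obtain ⟨q, hq, hdq⟩ : ∃ q ∈ M'.grading (i - 1), M'.d q = restFn f φ m :=
    M'.exists_mem_d_eq (φ.deg_mem hm) hp.symm
  obtain ⟨c, -, t, ht, htc⟩ :
      ∃ c ∈ M.grading (i - 1), ∃ t ∈ T, f.toRingHom t • q = restFn f φ c := hφ.1 (i - 1) q hq
  have hker : restFn f φ (t • m - M.d c) = 0 := by
    rw [restFn_sub, restFn_smul, restFn_d, ← htc, ← hdq,
      M'.d_smul_of_mem_zero (f.deg_mem (hT0 t ht)), sub_self]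
  obtain ⟨t', ht', h0⟩ := hφ.2 _ hker
  rw [smul_sub, sub_eq_zero] at h0
  refine ⟨t' * t, hTmul t' ht' t ht, t' • c, ?_⟩
  rw [mul_smul, h0, M.d_smul_of_mem_zero (hT0 t' ht')]

theorem cohomology_isLocalized (hφ : IsLocalizedDGMod f T φ)
    (hT0 : ∀ t ∈ T, t ∈ 𝒜 0) (hTmul : ∀ t ∈ T, ∀ t' ∈ T, t * t' ∈ T) :
    (∀ i : ℤ, ∀ x ∈ M'.grading i, M'.d x = 0 →
      ∃ m ∈ M.grading i, M.d m = 0 ∧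
        ∃ t ∈ T, ∃ p, f.toRingHom t • x - restFn f φ m = M'.d p) ∧
    (∀ i : ℤ, ∀ m ∈ M.grading i, M.d m = 0 → (∃ p, restFn f φ m = M'.d p) →
      ∃ t ∈ T, ∃ q, t • m = M.d q) := by
  refine ⟨fun i x hx hdx => ?_, fun i m hm _ ⟨p, hp⟩ => hφ.exists_smul_eq_d hT0 hTmul hm hp⟩
  obtain ⟨m, hm, hdm, t, ht, htm⟩ := hφ.exists_cocycle_map_eq_smul hT0 hTmul hx hdx
  exact ⟨m, hm, hdm, t, ht, 0, by rw [htm, sub_self, map_zero]⟩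

end IsLocalizedDGMod

def DGRingHom.toRestSelf (f : DGRingHom A B) : A.self ⟶ f.rest B.self where
  toFun :=
    { toFun := f.toRingHom
      map_add' := map_add _
      map_smul' := map_mul f.toRingHom }
  deg_mem := f.deg_mem
  comm_d := f.comm_d

theorem IsDGLocalization.isLocalizedDGMod_toRestSelf (h : IsDGLocalization f T) :
    IsLocalizedDGMod f T f.toRestSelf :=
  ⟨h.2.1, h.2.2⟩

end LocalizedCohomology

section Statement6

variable {R : Type} [Ring R] {𝒜 : ℤ → AddSubgroup R} [GradedRing 𝒜]
variable {S : Type} [Ring S] {𝓑 : ℤ → AddSubgroup S} [GradedRing 𝓑]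

theorem statement6_general (A : DGRing R 𝒜) (B : DGRing S 𝓑) (T : Set R)
    (hT0 : ∀ t ∈ T, t ∈ 𝒜 0) (hTmul : ∀ t ∈ T, ∀ t' ∈ T, t * t' ∈ T)
    (f : DGRingHom A B) (hloc : IsDGLocalization f T) :
    -- (1) `H(A_S) ≅ H(A)_S` as graded `H(A)`-rings:
    ((∀ i : ℤ, ∀ b ∈ 𝓑 i, B.d b = 0 →
        ∃ a ∈ 𝒜 i, A.d a = 0 ∧ ∃ t ∈ T, ∃ p, f.toRingHom t * b - f.toRingHom a = B.d p) ∧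
      (∀ i : ℤ, ∀ a ∈ 𝒜 i, A.d a = 0 → (∃ p, f.toRingHom a = B.d p) →
        ∃ t ∈ T, ∃ q, t * a = A.d q)) ∧
    -- (2) `H(A_S ⊗_A M) ≅ H(A)_S ⊗_{H(A)} H(M)`, compatibly with the map from `H(M)`:
    (∀ (M : DGMod A) (M' : DGMod B) (φ : M ⟶ f.rest M'), IsLocalizedDGMod f T φ →
      (∀ i : ℤ, ∀ x ∈ M'.grading i, M'.d x = 0 →
        ∃ m ∈ M.grading i, M.d m = 0 ∧
          ∃ t ∈ T, ∃ p, f.toRingHom t • x - restFn f φ m = M'.d p) ∧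
      (∀ i : ℤ, ∀ m ∈ M.grading i, M.d m = 0 → (∃ p, restFn f φ m = M'.d p) →
        ∃ t ∈ T, ∃ q, t • m = M.d q)) :=
  ⟨hloc.isLocalizedDGMod_toRestSelf.cohomology_isLocalized hT0 hTmul,
    fun _ _ _ hφ => hφ.cohomology_isLocalized hT0 hTmul⟩

/-- Proposition 4.4 of the paper.  Let `A` be a commutative DG ring,
`S̄` a multiplicatively closed subset of `Ā = H⁰(A)`, with preimage
`T = π⁻¹(S̄) ∩ A⁰ ⊆ A⁰` (a multiplicatively closed set of degree-`0` elements, saturated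
modulo boundaries).  Let `f : A → A_S` be the corresponding localization of DG rings.
Then, in each degree:
(1) `H(A_S) ≅ H(A)_S` canonically and uniquely (as graded `H(A)`-rings): every cocycle of
`A_S` agrees, up to a denominator in `T` and a boundary, with the image of a cocycle of
`A`, and a cocycle of `A` whose image is a boundary is annihilated by `T` modulo
boundaries; and
(2) the analogous statements hold for the localization `A_S ⊗_A M` of any DG `A`-module
`M`, compatibly with the maps from `H(M)`. -/
theorem statement6 (A : DGRing R 𝒜) (hA : IsCommDGRing A)
    (B : DGRing S 𝓑) (hB : IsCommDGRing B)
    (T : Set R)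
    (hT0 : ∀ t ∈ T, t ∈ 𝒜 0) (hT1 : (1 : R) ∈ T)
    (hTmul : ∀ t ∈ T, ∀ t' ∈ T, t * t' ∈ T)
    (hTsat : ∀ t ∈ T, ∀ t' ∈ 𝒜 0, (∃ p, t - t' = A.d p) → t' ∈ T)
    (f : DGRingHom A B) (hloc : IsDGLocalization f T) :
    -- (1) `H(A_S) ≅ H(A)_S` as graded `H(A)`-rings:
    ((∀ i : ℤ, ∀ b ∈ 𝓑 i, B.d b = 0 →
        ∃ a ∈ 𝒜 i, A.d a = 0 ∧ ∃ t ∈ T, ∃ p, f.toRingHom t * b - f.toRingHom a = B.d p) ∧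
      (∀ i : ℤ, ∀ a ∈ 𝒜 i, A.d a = 0 → (∃ p, f.toRingHom a = B.d p) →
        ∃ t ∈ T, ∃ q, t * a = A.d q)) ∧
    -- (2) `H(A_S ⊗_A M) ≅ H(A)_S ⊗_{H(A)} H(M)`, compatibly with the map from `H(M)`:
    (∀ (M : DGMod A) (M' : DGMod B) (φ : M ⟶ f.rest M'), IsLocalizedDGMod f T φ →
      (∀ i : ℤ, ∀ x ∈ M'.grading i, M'.d x = 0 →
        ∃ m ∈ M.grading i, M.d m = 0 ∧
          ∃ t ∈ T, ∃ p, f.toRingHom t • x - restFn f φ m = M'.d p) ∧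
      (∀ i : ℤ, ∀ m ∈ M.grading i, M.d m = 0 → (∃ p, restFn f φ m = M'.d p) →
        ∃ t ∈ T, ∃ q, t • m = M.d q)) :=
  statement6_general A B T hT0 hTmul f hloc

end Statement6
end

section
/- Let A be a commutative DG ring and (e₁,...,eₙ) an idempotent covering sequence of Ā = H⁰(A). Then the DG ring homomorphism λ = (λ₁,...,λₙ) : A → A₁ × ⋯ × Aₙ, where Aᵢ := A_{eᵢ} is the localization of A at eᵢ, is a quasi-isomorphism. -/
/-!
Common framework: nonpositive differential graded rings (DG rings), DG modules,
the category of DG modules, quasi-isomorphisms and derived categories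
(presented as localizations at quasi-isomorphisms), semi-free DG modules, etc.
-/

open CategoryTheory CategoryTheory.Limits MonoidalCategory

/-! Modulo boundaries an element of `locSet A e` is a power of the idempotent `e`, i.e. `1`
or `e`, and `λ(e)` is a unit that is idempotent up to a boundary, so it acts as the identity on
`H(A_e)`. Hence each cocycle `bₖ` of `Aₖ` is, up to a boundary, the image of a cocycle `aₖ`
of `A`, and `∑ⱼ eⱼ aⱼ` lifts the whole tuple because `eₖ eⱼ` is a boundary for `j ≠ k`.
Conversely, if every `λₖ(a)` is a boundary then so is every `eₖ a`, hence so is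
`a ≡ ∑ₖ eₖ a`. -/

theorem Units.coe_inv_mem_zero {S : Type} [Ring S] {𝓑 : ℤ → AddSubgroup S} [GradedRing 𝓑]
    (u : Sˣ) (hu : (u : S) ∈ 𝓑 0) : ((u⁻¹ : Sˣ) : S) ∈ 𝓑 0 := by
  rw [u.inv_eq_of_mul_eq_one_right (a := DirectSum.decompose 𝓑 ((u⁻¹ : Sˣ) : S) 0)]
  · exact SetLike.coe_mem _
  · rw [← DirectSum.coe_decompose_mul_of_left_mem_zero 𝓑 hu, u.mul_inv,
      DirectSum.decompose_of_mem_same 𝓑 (SetLike.one_mem_graded 𝓑)]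

namespace DGRing

variable {S : Type} [Ring S] {𝓑 : ℤ → AddSubgroup S} [GradedRing 𝓑] (B : DGRing S 𝓑)

theorem mem_range_d_iff {x : S} : x ∈ B.d.range ↔ ∃ p, x = B.d p := by
  simp only [AddMonoidHom.mem_range, eq_comm]

theorem d_eq_zero_of_mem_zero_s8 {a : S} (h : a ∈ 𝓑 0) : B.d a = 0 := by
  simpa [B.nonpos 1 one_pos] using B.d_mem h

theorem d_mul_of_mem_zero {a : S} (h : a ∈ 𝓑 0) (b : S) : B.d (a * b) = a * B.d b := by
  simpa [B.d_eq_zero_of_mem_zero_s8 h] using B.leibniz a b h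

theorem d_mul_of_d_eq_zero (a : S) {b : S} (hb : B.d b = 0) : B.d (a * b) = B.d a * b := by
  induction a using DirectSum.Decomposition.inductionOn 𝓑 with
  | zero => simp
  | homogeneous a => simp [B.leibniz _ b a.2, hb]
  | add x y hx hy => rw [add_mul, map_add, hx, hy, map_add, add_mul]

theorem mul_mem_range_d_of_mem_zero {a x : S} (ha : a ∈ 𝓑 0) (hx : x ∈ B.d.range) :
    a * x ∈ B.d.range := by
  obtain ⟨p, rfl⟩ := hx
  exact ⟨a * p, B.d_mul_of_mem_zero ha p⟩

theorem mul_mem_range_d_of_d_eq_zero {x b : S} (hx : x ∈ B.d.range) (hb : B.d b = 0) :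
    x * b ∈ B.d.range := by
  obtain ⟨p, rfl⟩ := hx
  exact ⟨p * b, B.d_mul_of_d_eq_zero p hb⟩

theorem coe_decompose_d (p : S) (i : ℤ) :
    (DirectSum.decompose 𝓑 (B.d p) i : S) = B.d (DirectSum.decompose 𝓑 p (i - 1)) := by
  induction p using DirectSum.Decomposition.inductionOn 𝓑 with
  | zero => simp
  | @homogeneous j p =>
    obtain ⟨p, hp⟩ := p
    by_cases hij : i = j + 1
    · subst hij
      rw [DirectSum.decompose_of_mem_same 𝓑 (B.d_mem hp), add_sub_cancel_right,
        DirectSum.decompose_of_mem_same 𝓑 hp]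
    · rw [DirectSum.decompose_of_mem_ne 𝓑 (B.d_mem hp) (Ne.symm hij),
        DirectSum.decompose_of_mem_ne 𝓑 hp (by omega), map_zero]
  | add x y hx hy => simp only [map_add, DirectSum.decompose_add, DirectSum.add_apply,
      AddSubgroup.coe_add, hx, hy]

theorem exists_mem_d_eq_of_mem_range_d {i : ℤ} {x : S} (hx : x ∈ 𝓑 i) (hb : x ∈ B.d.range) :
    ∃ p ∈ 𝓑 (i - 1), B.d p = x := by
  obtain ⟨p, rfl⟩ := hb
  exact ⟨_, SetLike.coe_mem _, by rw [← coe_decompose_d, DirectSum.decompose_of_mem_same 𝓑 hx]⟩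

theorem mem_range_d_of_isUnit_mul {u y : S} (hu : u ∈ 𝓑 0) (hunit : IsUnit u)
    (hy : u * y ∈ B.d.range) : y ∈ B.d.range := by
  obtain ⟨u, rfl⟩ := hunit
  simpa [← mul_assoc] using B.mul_mem_range_d_of_mem_zero (u.coe_inv_mem_zero hu) hy

-- `u (u x - x) = (u² - u) x`
theorem mul_sub_mem_range_d_of_isUnit {u x : S} (hu : u ∈ 𝓑 0) (hunit : IsUnit u)
    (hidem : u * u - u ∈ B.d.range) (hx : B.d x = 0) : u * x - x ∈ B.d.range := by
  refine B.mem_range_d_of_isUnit_mul hu hunit ?_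
  simpa [mul_sub, sub_mul, mul_assoc] using B.mul_mem_range_d_of_d_eq_zero hidem hx

end DGRing

section Localization

variable {R : Type} [Ring R] {𝒜 : ℤ → AddSubgroup R} [GradedRing 𝒜] {A : DGRing R 𝒜}
variable {S : Type} [Ring S] {𝓑 : ℤ → AddSubgroup S} [GradedRing 𝓑] {B : DGRing S 𝓑}
variable {e : R}

theorem DGRingHom.map_mem_range_d (f : DGRingHom A B) {a : R} (ha : a ∈ A.d.range) :
    f.toRingHom a ∈ B.d.range := by
  obtain ⟨p, rfl⟩ := ha
  exact ⟨f.toRingHom p, (f.comm_d p).symm⟩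

theorem self_mem_locSet (he : e ∈ 𝒜 0) : e ∈ locSet A e :=
  ⟨he, 1, 0, by simp⟩

theorem mul_mem_locSet (he : e ∈ 𝒜 0) {t t' : R} (ht : t ∈ locSet A e)
    (ht' : t' ∈ locSet A e) : t * t' ∈ locSet A e := by
  obtain ⟨h0, m, q, hq⟩ := ht
  obtain ⟨h0', m', q', hq'⟩ := ht'
  refine ⟨by simpa using SetLike.mul_mem_graded h0 h0', m + m',
    e ^ m * q' + q * e ^ m' + q * A.d q', ?_⟩
  have hem : ∀ k : ℕ, e ^ k ∈ 𝒜 0 := fun k => by simpa using SetLike.pow_mem_graded k he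
  rw [map_add, map_add, A.d_mul_of_mem_zero (hem m),
    A.d_mul_of_d_eq_zero q (A.d_eq_zero_of_mem_zero_s8 (hem m')),
    A.d_mul_of_d_eq_zero q (A.d_sq q'), eq_add_of_sub_eq hq, eq_add_of_sub_eq hq', pow_add]
  noncomm_ring

theorem pow_sub_mem_range_d (he : e ∈ 𝒜 0) (hidem : e * e - e ∈ A.d.range) {m : ℕ}
    (hm : 1 ≤ m) : e ^ m - e ∈ A.d.range := by
  induction m, hm using Nat.le_induction with
  | base => simp
  | succ m _ ih =>
    rw [pow_succ', show e * e ^ m - e = e * (e ^ m - e) + (e * e - e) by noncomm_ring]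
    exact add_mem (A.mul_mem_range_d_of_mem_zero he ih) hidem

theorem sub_one_mem_range_d_or_sub_mem_range_d (he : e ∈ 𝒜 0) (hidem : e * e - e ∈ A.d.range)
    {t : R} (ht : t ∈ locSet A e) : t - 1 ∈ A.d.range ∨ t - e ∈ A.d.range := by
  obtain ⟨-, m, p, hp⟩ := ht
  rcases Nat.eq_zero_or_pos m with rfl | hm
  · exact .inl ⟨p, by simpa using hp.symm⟩
  · refine .inr ?_
    rw [show t - e = (t - e ^ m) + (e ^ m - e) by abel]
    exact add_mem ⟨p, hp.symm⟩ (pow_sub_mem_range_d he hidem hm)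

theorem mul_mem_range_d_of_mem_locSet (he : e ∈ 𝒜 0) (hidem : e * e - e ∈ A.d.range)
    {t a : R} (ht : t ∈ locSet A e) (ha : A.d a = 0) (hta : t * a ∈ A.d.range) :
    e * a ∈ A.d.range := by
  rcases sub_one_mem_range_d_or_sub_mem_range_d he hidem ht with h | h
  · have hmem : a ∈ A.d.range := by
      simpa [sub_mul] using sub_mem hta (A.mul_mem_range_d_of_d_eq_zero h ha)
    exact A.mul_mem_range_d_of_mem_zero he hmem
  · simpa [sub_mul] using sub_mem hta (A.mul_mem_range_d_of_d_eq_zero h ha)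

theorem DGRingHom.map_mul_sub_mem_range_d_of_mem_locSet (he : e ∈ 𝒜 0)
    (hidem : e * e - e ∈ A.d.range) (f : DGRingHom A B)
    (hunit : ∀ t ∈ locSet A e, IsUnit (f.toRingHom t)) {t : R} (ht : t ∈ locSet A e) {x : S}
    (hx : B.d x = 0) : f.toRingHom t * x - x ∈ B.d.range := by
  rcases sub_one_mem_range_d_or_sub_mem_range_d he hidem ht with h | h
  · simpa [sub_mul] using B.mul_mem_range_d_of_d_eq_zero (f.map_mem_range_d h) hx
  · have hex : f.toRingHom e * x - x ∈ B.d.range := by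
      refine B.mul_sub_mem_range_d_of_isUnit (f.deg_mem he) (hunit e (self_mem_locSet he)) ?_ hx
      simpa using f.map_mem_range_d hidem
    simpa [sub_mul] using add_mem (B.mul_mem_range_d_of_d_eq_zero (f.map_mem_range_d h) hx) hex

namespace IsDGLocalization

variable {f : DGRingHom A B}

theorem exists_cocycle_map_sub_mem_range_d (hloc : IsDGLocalization f (locSet A e))
    (he : e ∈ 𝒜 0) (hidem : e * e - e ∈ A.d.range)
    {i : ℤ} {b : S} (hb : b ∈ 𝓑 i) (hdb : B.d b = 0) :
    ∃ a ∈ 𝒜 i, A.d a = 0 ∧ f.toRingHom a - b ∈ B.d.range := by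
  obtain ⟨a, ha, t, ht, hta⟩ := hloc.2.1 i b hb
  have hda : f.toRingHom (A.d a) = 0 := by
    rw [f.comm_d, ← hta, B.d_mul_of_mem_zero (f.deg_mem ht.1), hdb, mul_zero]
  obtain ⟨t', ht', ht'a⟩ := hloc.2.2 _ hda
  refine ⟨t' * a, by simpa using SetLike.mul_mem_graded ht'.1 ha,
    by rw [A.d_mul_of_mem_zero ht'.1, ht'a], ?_⟩
  have := f.map_mul_sub_mem_range_d_of_mem_locSet he hidem hloc.1 (mul_mem_locSet he ht' ht) hdb
  rwa [map_mul, mul_assoc, hta, ← map_mul] at this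

theorem mul_mem_range_d_of_map_mem_range_d (hloc : IsDGLocalization f (locSet A e))
    (he : e ∈ 𝒜 0) (hidem : e * e - e ∈ A.d.range)
    {i : ℤ} {a : R} (ha : a ∈ 𝒜 i) (hda : A.d a = 0)
    (hfa : f.toRingHom a ∈ B.d.range) : e * a ∈ A.d.range := by
  obtain ⟨p, hp, hpa⟩ := B.exists_mem_d_eq_of_mem_range_d (f.deg_mem ha) hfa
  obtain ⟨c, -, t, ht, htc⟩ := hloc.2.1 (i - 1) p hp
  have hker : f.toRingHom (A.d c - t * a) = 0 := by
    rw [map_sub, f.comm_d, map_mul, ← htc, B.d_mul_of_mem_zero (f.deg_mem ht.1), hpa, sub_self]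
  obtain ⟨t', ht', ht'c⟩ := hloc.2.2 _ hker
  refine mul_mem_range_d_of_mem_locSet he hidem (mul_mem_locSet he ht' ht) hda ⟨t' * c, ?_⟩
  rw [A.d_mul_of_mem_zero ht'.1, mul_assoc, ← sub_eq_zero, ← mul_sub, ht'c]

end IsDGLocalization

-- `λₖ(eₖ)` is invertible and `eₖ eⱼ` is a boundary for `j ≠ k`.
theorem IsIdempotentCoveringSeq.map_sum_mul_sub_mem_range_d {n : ℕ} {e : Fin n → R}
    (he : IsIdempotentCoveringSeq A e) (k : Fin n) {f : DGRingHom A B}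
    (hunit : ∀ t ∈ locSet A (e k), IsUnit (f.toRingHom t)) {a : Fin n → R}
    (ha : ∀ j, A.d (a j) = 0) :
    f.toRingHom (∑ j, e j * a j) - f.toRingHom (a k) ∈ B.d.range := by
  obtain ⟨he0, hidem, horth, -⟩ := he
  have hfa : ∀ j, B.d (f.toRingHom (a j)) = 0 := fun j => by rw [← f.comm_d, ha j, map_zero]
  have hk : f.toRingHom (e k * a k) - f.toRingHom (a k) ∈ B.d.range := by
    rw [map_mul]
    exact f.map_mul_sub_mem_range_d_of_mem_locSet (he0 k) ((A.mem_range_d_iff).2 (hidem k))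
      hunit (self_mem_locSet (he0 k)) (hfa k)
  have hj : ∀ j ∈ ({k}ᶜ : Finset (Fin n)), f.toRingHom (e j * a j) ∈ B.d.range := by
    intro j hj
    refine B.mem_range_d_of_isUnit_mul (f.deg_mem (he0 k)) (hunit _ (self_mem_locSet (he0 k))) ?_
    rw [← map_mul, ← mul_assoc]
    refine f.map_mem_range_d (A.mul_mem_range_d_of_d_eq_zero ?_ (ha j))
    exact (A.mem_range_d_iff).2 (horth k j (by simpa [eq_comm] using hj))
  rw [map_sum, Fintype.sum_eq_add_sum_compl k, add_sub_right_comm]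
  exact add_mem hk (sum_mem hj)

end Localization

section Statement8

variable {R : Type} [Ring R] {𝒜 : ℤ → AddSubgroup R} [GradedRing 𝒜]

theorem statement8_general (A : DGRing R 𝒜)
    {n : ℕ} (e : Fin n → R) (he : IsIdempotentCoveringSeq A e)
    (W : Fin n → DGRingPack) (lam : ∀ k, DGRingHom A (W k).B)
    (hloc : ∀ k, IsDGLocalization (lam k) (locSet A (e k))) :
    -- surjectivity of `H(λ)`:
    (∀ i : ℤ, ∀ b : ∀ k, (W k).S,
      (∀ k, b k ∈ (W k).𝓑 i ∧ (W k).B.d (b k) = 0) →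
      ∃ a ∈ 𝒜 i, A.d a = 0 ∧ ∀ k, ∃ p, b k - (lam k).toRingHom a = (W k).B.d p) ∧
    -- injectivity of `H(λ)`:
    (∀ i : ℤ, ∀ a ∈ 𝒜 i, A.d a = 0 →
      (∀ k, ∃ p, (lam k).toRingHom a = (W k).B.d p) → ∃ q, A.d q = a) := by
  have hidem : ∀ k, e k * e k - e k ∈ A.d.range := fun k => (A.mem_range_d_iff).2 (he.2.1 k)
  refine ⟨fun i b hb => ?_, fun i a ha hda hbdry => ?_⟩
  · choose a ha hda hab using fun k =>
      (hloc k).exists_cocycle_map_sub_mem_range_d (he.1 k) (hidem k) (hb k).1 (hb k).2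
    refine ⟨∑ j, e j * a j,
      sum_mem fun j _ => by simpa using SetLike.mul_mem_graded (he.1 j) (ha j),
      by simp [map_sum, A.d_mul_of_mem_zero (he.1 _), hda], fun k => ?_⟩
    refine ((W k).B.mem_range_d_iff).1 ?_
    simpa using neg_mem (add_mem (hab k) (he.map_sum_mul_sub_mem_range_d k (hloc k).1 hda))
  · have hea : ∀ k, e k * a ∈ A.d.range := fun k =>
      (hloc k).mul_mem_range_d_of_map_mem_range_d (he.1 k) (hidem k) ha hda
        (((W k).B.mem_range_d_iff).2 (hbdry k))
    obtain ⟨p, hp⟩ := he.2.2.2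
    have hsum : (∑ k, e k - 1) * a ∈ A.d.range :=
      A.mul_mem_range_d_of_d_eq_zero ⟨p, hp.symm⟩ hda
    have := sub_mem (sum_mem (t := Finset.univ) fun k _ => hea k) hsum
    rwa [sub_mul, one_mul, Finset.sum_mul, sub_sub_cancel] at this

/-- Proposition 4.11 of the paper.  Let `A` be a commutative DG ring and
`(e₁, ..., eₙ)` an idempotent covering sequence of `Ā = H⁰(A)`.  Let `Aₖ := A_{eₖ}` be the
localizations of `A` at the `eₖ`, with canonical homomorphisms `λₖ : A → Aₖ`.  Then the
homomorphism `λ = (λ₁, ..., λₙ) : A → A₁ × ⋯ × Aₙ` is a quasi-isomorphism, i.e. the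
induced map `H(A) → ∏ₖ H(Aₖ)` is bijective in each degree. -/
theorem statement8 (A : DGRing R 𝒜) (hA : IsCommDGRing A)
    {n : ℕ} (e : Fin n → R) (he : IsIdempotentCoveringSeq A e)
    (W : Fin n → DGRingPack) (lam : ∀ k, DGRingHom A (W k).B)
    (hloc : ∀ k, IsDGLocalization (lam k) (locSet A (e k))) :
    -- surjectivity of `H(λ)`:
    (∀ i : ℤ, ∀ b : ∀ k, (W k).S,
      (∀ k, b k ∈ (W k).𝓑 i ∧ (W k).B.d (b k) = 0) →
      ∃ a ∈ 𝒜 i, A.d a = 0 ∧ ∀ k, ∃ p, b k - (lam k).toRingHom a = (W k).B.d p) ∧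
    -- injectivity of `H(λ)`:
    (∀ i : ℤ, ∀ a ∈ 𝒜 i, A.d a = 0 →
      (∀ k, ∃ p, (lam k).toRingHom a = (W k).B.d p) → ∃ q, A.d q = a) :=
  statement8_general A e he W lam hloc

end Statement8
end
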